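/- Suppose the growth function is f(k) = k. Then for every d ≥ 1 and μ ≥ 0, the cardinality of the nested Smolyak grid is N(d,μ) = C(d+μ, μ). -/

import Mathlib

/-- Multi-indices `i : Fin d → ℕ` with `i k ≥ 1` for all `k` and `∑ k, i k = d + μ`. -/
def smolyakIndices (d μ : ℕ) : Finset (Fin d → ℕ) :=
  (Fintype.piFinset fun _ => Finset.Icc 1 (d + μ)).filter fun i => ∑ k, i k = d + μ

/-- The Smolyak grid `Γ(d, μ)` based on the node sets `S`. -/
noncomputable def smolyakGrid (S : ℕ → Finset ℝ) (d μ : ℕ) : Finset (Fin d → ℝ) :=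
  (smolyakIndices d μ).biUnion fun i => Fintype.piFinset fun k => S (i k)

/-- `N(d, μ)`: the number of nodes in the Smolyak grid. -/
noncomputable def smolyakCard (S : ℕ → Finset ℝ) (d μ : ℕ) : ℕ :=
  (smolyakGrid S d μ).card

/-!
Nestedness and `#S k = k` mean that each level adds exactly one new node, so
`S k = {g 0, …, g (k - 1)}` for an injective sequence `g`. By nestedness the slack in
`∑ i k = d + μ` can be moved onto a single coordinate, so `x ∈ Γ(d, μ)` iff `x = g ∘ l` for some
`l : Fin d → ℕ` with `∑ l ≤ μ`, and `l` is then unique. Appending the slack `μ - ∑ l` as an extra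
coordinate identifies these `l` with the compositions of `μ` into `d + 1` parts, of which there
are `C(d + μ, μ)` by stars and bars.
-/

open Finset

theorem Finset.card_finAntidiagonal_nat (d n : ℕ) :
    #(finAntidiagonal d n) = (d + n - 1).choose n := by
  have : finAntidiagonal d n = piAntidiag univ n := by ext f; simp
  rw [this, ← map_sym_eq_piAntidiag, card_map, sym_univ, card_univ, Sym.card_sym_eq_choose,
    Fintype.card_fin]

def tuplesSumLE (d μ : ℕ) : Finset (Fin d → ℕ) :=
  {l ∈ Fintype.piFinset fun _ => range (μ + 1) | ∑ k, l k ≤ μ}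

theorem mem_tuplesSumLE {d μ : ℕ} {l : Fin d → ℕ} : l ∈ tuplesSumLE d μ ↔ ∑ k, l k ≤ μ := by
  simp only [tuplesSumLE, mem_filter, Fintype.mem_piFinset, mem_range, and_iff_right_iff_imp]
  exact fun h k =>
    Nat.lt_succ_of_le ((single_le_sum (fun _ _ => Nat.zero_le _) (mem_univ k)).trans h)

theorem image_init_finAntidiagonal (d μ : ℕ) :
    (finAntidiagonal (d + 1) μ).image Fin.init = tuplesSumLE d μ := by
  ext l
  simp only [mem_image, mem_finAntidiagonal, mem_tuplesSumLE, Fin.sum_univ_castSucc]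
  constructor
  · rintro ⟨P, hP, rfl⟩
    simp only [Fin.init]
    omega
  · intro hl
    refine ⟨Fin.snoc l (μ - ∑ k, l k), ?_, Fin.init_snoc _ _⟩
    simp only [Fin.snoc_castSucc, Fin.snoc_last]
    omega

theorem injOn_init_finAntidiagonal (d μ : ℕ) :
    Set.InjOn Fin.init (finAntidiagonal (d + 1) μ : Set (Fin (d + 1) → ℕ)) := by
  intro P hP Q hQ h
  simp only [mem_coe, mem_finAntidiagonal, Fin.sum_univ_castSucc] at hP hQ
  have hlast : P (Fin.last d) = Q (Fin.last d) := by
    have : ∑ k : Fin d, P k.castSucc = ∑ k : Fin d, Q k.castSucc := by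
      simpa only [Fin.init] using congrArg (fun l : Fin d → ℕ => ∑ k, l k) h
    omega
  rw [← Fin.snoc_init_self P, ← Fin.snoc_init_self Q, h, hlast]

theorem card_tuplesSumLE (d μ : ℕ) : #(tuplesSumLE d μ) = (d + μ).choose μ := by
  rw [← image_init_finAntidiagonal, card_image_of_injOn (injOn_init_finAntidiagonal d μ),
    card_finAntidiagonal_nat, Nat.add_right_comm, Nat.add_sub_cancel]

theorem Finset.exists_injective_image_range_eq {α : Type*} [DecidableEq α] {T : ℕ → Finset α}
    (hT : ∀ n, T n ⊆ T (n + 1)) (hcard : ∀ n, #(T n) = n) :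
    ∃ g : ℕ → α, Function.Injective g ∧ ∀ n, T n = (range n).image g := by
  have hstep : ∀ n, ∃ a, T (n + 1) \ T n = {a} := fun n =>
    card_eq_one.1 (by rw [card_sdiff_of_subset (hT n), hcard, hcard]; omega)
  choose g hg using hstep
  have himage : ∀ n, T n = (range n).image g := by
    intro n
    induction n with
    | zero => simpa using hcard 0
    | succ n ih =>
      rw [← sdiff_union_of_subset (hT n), hg n, ih, range_add_one, image_insert, insert_eq]
  refine ⟨g, fun a b hab => ?_, himage⟩
  have hinj : Set.InjOn g (range (max a b + 1)) :=
    card_image_iff.1 (by rw [← himage, hcard, card_range])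
  exact hinj (mem_range.2 (by omega)) (mem_range.2 (by omega)) hab

theorem mem_smolyakIndices {d μ : ℕ} {i : Fin d → ℕ} :
    i ∈ smolyakIndices d μ ↔ (∀ k, 1 ≤ i k) ∧ ∑ k, i k = d + μ := by
  simp only [smolyakIndices, mem_filter, Fintype.mem_piFinset, mem_Icc]
  constructor
  · exact fun ⟨h, hsum⟩ => ⟨fun k => (h k).1, hsum⟩
  · rintro ⟨h, hsum⟩
    exact ⟨fun k => ⟨h k, hsum ▸ single_le_sum (fun _ _ => Nat.zero_le _) (mem_univ k)⟩, hsum⟩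

theorem mem_smolyakGrid_iff_exists_sum_le {S : ℕ → Finset ℝ}
    (hS : ∀ k, 1 ≤ k → S k ⊆ S (k + 1)) {d μ : ℕ} (hd : 1 ≤ d) {x : Fin d → ℝ} :
    x ∈ smolyakGrid S d μ ↔ ∃ j : Fin d → ℕ, ∑ k, j k ≤ μ ∧ ∀ k, x k ∈ S (j k + 1) := by
  have hmono : MonotoneOn S (Set.Ici 1) := monotoneOn_nat_Ici_of_le_succ hS
  simp only [smolyakGrid, mem_biUnion, Fintype.mem_piFinset, mem_smolyakIndices]
  constructor
  · rintro ⟨i, ⟨hi, hsum⟩, hx⟩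
    have : ∑ k, (i k - 1) + d = ∑ k, i k :=
      calc ∑ k, (i k - 1) + d = ∑ k, (i k - 1 + 1) := by simp [sum_add_distrib]
        _ = ∑ k, i k := sum_congr rfl fun k _ => Nat.sub_add_cancel (hi k)
    refine ⟨fun k => i k - 1, show ∑ k, (i k - 1) ≤ μ by omega, fun k => ?_⟩
    rw [Nat.sub_add_cancel (hi k)]
    exact hx k
  · rintro ⟨j, hj, hx⟩
    let i : Fin d → ℕ :=
      fun k => j k + 1 + (Pi.single (⟨0, hd⟩ : Fin d) (μ - ∑ k, j k) : Fin d → ℕ) k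
    have hsum : ∑ k, i k = d + μ := by
      simp only [i, sum_add_distrib, sum_pi_single', mem_univ, if_true, sum_const, card_univ,
        Fintype.card_fin, smul_eq_mul, mul_one]
      omega
    have hji : ∀ k, j k + 1 ≤ i k := fun k => Nat.le_add_right _ _
    have hi : ∀ k, 1 ≤ i k := fun k => (Nat.le_add_left 1 (j k)).trans (hji k)
    exact ⟨i, ⟨hi, hsum⟩, fun k => hmono (Nat.le_add_left 1 (j k)) (hi k) (hji k) (hx k)⟩

theorem smolyakGrid_eq_image_tuplesSumLE {S : ℕ → Finset ℝ} {g : ℕ → ℝ}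
    (hS : ∀ m, S (m + 1) = (range (m + 1)).image g) {d μ : ℕ} (hd : 1 ≤ d) :
    smolyakGrid S d μ = (tuplesSumLE d μ).image (g ∘ ·) := by
  have hnested : ∀ k, 1 ≤ k → S k ⊆ S (k + 1) := by
    rintro (_ | m) hm
    · omega
    · rw [hS, hS]
      exact image_subset_image (range_subset_range.2 (by omega))
  ext x
  simp only [mem_smolyakGrid_iff_exists_sum_le hnested hd, hS, mem_image, mem_range,
    Nat.lt_succ_iff, mem_tuplesSumLE]
  constructor
  · rintro ⟨j, hj, hx⟩
    choose l hl hgl using hx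
    exact ⟨l, (sum_le_sum fun k _ => hl k).trans hj, funext hgl⟩
  · rintro ⟨l, hl, rfl⟩
    exact ⟨l, hl, fun k => ⟨l k, le_rfl, rfl⟩⟩

/-- For the growth function `f(k) = k`, the nested Smolyak grid has `N(d, μ) = C(d+μ, μ)`
nodes. -/
theorem smolyakCard_of_id
    (S : ℕ → Finset ℝ) (hS_nested : ∀ k, 1 ≤ k → S k ⊆ S (k + 1))
    (hS_card : ∀ k, 1 ≤ k → (S k).card = k)
    (d μ : ℕ) (hd : 1 ≤ d) :
    smolyakCard S d μ = (d + μ).choose μ := by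
  -- `S 0` is unconstrained; replacing it by `∅` gives a chain whose `n`-th member has `n` nodes.
  set T := Function.update S 0 ∅
  have hT_succ : ∀ n, T (n + 1) = S (n + 1) := fun n => Function.update_of_ne n.succ_ne_zero _ _
  have hT_nested : ∀ n, T n ⊆ T (n + 1) := by
    rintro (_ | n)
    · simp [T]
    · rw [hT_succ, hT_succ]
      exact hS_nested _ (by omega)
  have hT_card : ∀ n, #(T n) = n := by
    rintro (_ | n)
    · simp [T]
    · rw [hT_succ, hS_card _ (by omega)]
  obtain ⟨g, hg, hTg⟩ := exists_injective_image_range_eq hT_nested hT_card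
  have hSg : ∀ m, S (m + 1) = (range (m + 1)).image g := fun m => hT_succ m ▸ hTg (m + 1)
  rw [smolyakCard, smolyakGrid_eq_image_tuplesSumLE hSg hd,
    card_image_of_injective _ hg.comp_left, card_tuplesSumLE]
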